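/- Let (Q_j) be a finite collection of pairwise disjoint dyadic cubes in ℝⁿ, each of side length l(Q_j) ≥ δ, such that for every dyadic cube I one has Σ_{Q_j ⊂ I} l(Q_j)^α ≤ l(I)^α, where 0 < α ≤ n. Then the δ-neighbourhood X of the union of those Q_j with l(Q_j) = δ satisfies |X ∩ B(x, r)| ≤ C_n · δ^{n}·(r/δ)^α for all x ∈ ℝⁿ and all δ ≤ r ≤ 1. -/

import Mathlib

open MeasureTheory Metric Pointwise
open scoped Classical

/-- The dyadic cube of generation `k` (side length `2^{-k}`) indexed by `m ∈ ℤⁿ`. -/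
def dyadicCube {n : ℕ} (q : ℤ × (Fin n → ℤ)) : Set (EuclideanSpace ℝ (Fin n)) :=
  {x | ∀ i, (q.2 i : ℝ) * (2:ℝ) ^ (-q.1) ≤ x i ∧ x i < ((q.2 i : ℝ) + 1) * (2:ℝ) ^ (-q.1)}

lemma coord_le_norm {n : ℕ} (y : EuclideanSpace ℝ (Fin n)) (i : Fin n) : |y i| ≤ ‖y‖ := by
  rw [EuclideanSpace.norm_eq]
  calc |y i| = Real.sqrt (‖y i‖^2) := by
        rw [Real.sqrt_sq_eq_abs, Real.norm_eq_abs, abs_abs]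
    _ ≤ _ := by
        apply Real.sqrt_le_sqrt
        exact Finset.single_le_sum (f := fun j => ‖y j‖^2) (fun j _ => sq_nonneg _) (Finset.mem_univ i)

lemma volume_box {n : ℕ} (a b : Fin n → ℝ) :
    volume {y : EuclideanSpace ℝ (Fin n) | ∀ i, a i ≤ y i ∧ y i < b i}
      = ∏ i, ENNReal.ofReal (b i - a i) := by
  have h : {y : EuclideanSpace ℝ (Fin n) | ∀ i, a i ≤ y i ∧ y i < b i}
      = (MeasurableEquiv.toLp 2 (Fin n → ℝ)).symm ⁻¹' (Set.pi Set.univ fun i => Set.Ico (a i) (b i)) := by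
    ext y
    simp [Set.mem_pi, Set.mem_Ico]
  rw [h, MeasureTheory.MeasurePreserving.measure_preimage
      (EuclideanSpace.volume_preserving_symm_measurableEquiv_toLp (Fin n))
      ((MeasurableSet.univ_pi (fun i => measurableSet_Ico)).nullMeasurableSet),
    volume_pi_pi]
  simp [Real.volume_Ico]

lemma dyadicCube_subset_parent {n : ℕ} (k L : ℤ) (d : ℕ) (hd : (d:ℤ) = k - L) (m : Fin n → ℤ) :
    dyadicCube (n:=n) (k, m) ⊆ dyadicCube (n:=n) (L, fun i => (m i) / 2^d) := by
  intro x hx i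
  obtain ⟨h1, h2⟩ := hx i
  have hp : (0:ℤ) < 2^d := by positivity
  have e1 : 2^d * (m i / 2^d) ≤ m i := by
    have := Int.emod_add_mul_ediv (m i) (2^d)
    have := Int.emod_nonneg (m i) (ne_of_gt hp)
    omega
  have e2 : m i + 1 ≤ 2^d * (m i / 2^d + 1) := by
    have := Int.emod_add_mul_ediv (m i) (2^d)
    have := Int.emod_lt_of_pos (m i) hp
    nlinarith
  have hzp : (0:ℝ) < (2:ℝ)^(-k) := by positivity
  have hsplit : (2:ℝ)^(-L) = (2:ℝ)^(d:ℤ) * (2:ℝ)^(-k) := by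
    rw [← zpow_add₀ (by norm_num : (2:ℝ) ≠ 0)]
    congr 1; omega
  have hcast : ((2:ℝ))^(d:ℤ) = ((2^d : ℤ) : ℝ) := by push_cast; norm_num
  constructor
  · calc ((m i / 2^d : ℤ):ℝ) * (2:ℝ)^(-L)
        = ((2^d * (m i / 2^d) : ℤ) : ℝ) * (2:ℝ)^(-k) := by
          rw [hsplit, hcast]; push_cast; ring
      _ ≤ (m i : ℝ) * (2:ℝ)^(-k) := by
          apply mul_le_mul_of_nonneg_right _ hzp.le
          exact_mod_cast e1
      _ ≤ x i := h1
  · calc x i < ((m i : ℝ) + 1) * (2:ℝ)^(-k) := h2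
      _ ≤ ((2^d * (m i / 2^d + 1) : ℤ) : ℝ) * (2:ℝ)^(-k) := by
          apply mul_le_mul_of_nonneg_right _ hzp.le
          push_cast
          exact_mod_cast e2
      _ = (((m i / 2^d : ℤ):ℝ) + 1) * (2:ℝ)^(-L) := by
          rw [hsplit, hcast]; push_cast; ring


set_option maxHeartbeats 2000000 in
/-- If a finite family of pairwise disjoint dyadic cubes of side at least `δ = 2^{-k₀}`
satisfies the mass-distribution condition `Σ_{Q ⊆ I} l(Q)^α ≤ l(I)^α` for every dyadic
cube `I`, then the `δ`-neighbourhood of the union of the cubes of side exactly `δ`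
satisfies the `(δ,α)ₙ` ball non-concentration estimate. -/
theorem dyadic_mass_distribution_nonconcentration (n : ℕ) (hn : 0 < n) :
    ∃ C : ℝ, 0 < C ∧
    ∀ (α : ℝ) (k₀ : ℕ) (F : Finset (ℤ × (Fin n → ℤ))),
      0 < α → α ≤ n →
      (∀ q ∈ F, ∀ q' ∈ F, q ≠ q' →
        Disjoint (dyadicCube (n := n) q) (dyadicCube (n := n) q')) →
      (∀ q ∈ F, q.1 ≤ (k₀ : ℤ)) →
      (∀ I : ℤ × (Fin n → ℤ),
        ∑ q ∈ F.filter (fun q => dyadicCube (n := n) q ⊆ dyadicCube (n := n) I),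
          ((2:ℝ) ^ (-q.1)) ^ α ≤ ((2:ℝ) ^ (-I.1)) ^ α) →
      ∀ (x : EuclideanSpace ℝ (Fin n)) (r : ℝ),
        (2:ℝ) ^ (-(k₀:ℤ)) ≤ r → r ≤ 1 →
        volume (((⋃ q ∈ F.filter (fun q => q.1 = (k₀ : ℤ)), dyadicCube (n := n) q)
              + ball (0 : EuclideanSpace ℝ (Fin n)) ((2:ℝ) ^ (-(k₀:ℤ)))) ∩ ball x r)
          ≤ ENNReal.ofReal (C * ((2:ℝ) ^ (-(k₀:ℤ))) ^ (n : ℝ) * (r / (2:ℝ) ^ (-(k₀:ℤ))) ^ α) := by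
  refine ⟨(39:ℝ)^n, by positivity, ?_⟩
  intro α k₀ F hα hαn _hdisj _hside hmass x r hδr hr1
  set δ : ℝ := (2:ℝ)^(-(k₀:ℤ)) with hδdef
  have hδ0 : 0 < δ := by positivity
  have hr0 : 0 < r := lt_of_lt_of_le hδ0 hδr
  set L : ℤ := -Int.log 2 r with hLdef
  set ℓ : ℝ := (2:ℝ)^(-L) with hℓdef
  have hℓ0 : 0 < ℓ := by positivity
  have hℓr : ℓ ≤ r := by
    have := Int.zpow_log_le_self (R := ℝ) (b := 2) one_lt_two hr0
    rw [hℓdef, hLdef, neg_neg]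
    exact_mod_cast this
  have hr2ℓ : r < 2 * ℓ := by
    have := Int.lt_zpow_succ_log_self (R := ℝ) (b := 2) one_lt_two r
    have h2 : ((2:ℕ):ℝ) ^ (Int.log 2 r + 1) = 2 * ℓ := by
      rw [hℓdef, hLdef, neg_neg]
      push_cast
      rw [zpow_add₀ (by norm_num : (2:ℝ) ≠ 0)]
      ring
    rw [h2] at this
    exact this
  have hLk : L ≤ (k₀:ℤ) := by
    have h1 : (2:ℝ)^(-(k₀:ℤ)) < (2:ℝ)^(-L + 1) := by
      calc (2:ℝ)^(-(k₀:ℤ)) ≤ r := hδr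
        _ < 2 * ℓ := hr2ℓ
        _ = (2:ℝ)^(-L+1) := by
            rw [hℓdef, zpow_add₀ (by norm_num : (2:ℝ) ≠ 0)]; ring
    have := (zpow_lt_zpow_iff_right₀ (one_lt_two (α := ℝ))).mp h1
    omega
  have hδℓ : δ ≤ ℓ := zpow_le_zpow_right₀ one_le_two (by omega)
  set d : ℕ := ((k₀:ℤ) - L).toNat with hddef
  have hd : (d:ℤ) = (k₀:ℤ) - L := Int.toNat_of_nonneg (by omega)
  -- the relevant cubes
  set S : Finset (ℤ × (Fin n → ℤ)) :=
    F.filter (fun q => q.1 = (k₀:ℤ) ∧ (dyadicCube (n := n) q ∩ ball x (3*r)).Nonempty) with hSdef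
  set bigCube : (ℤ × (Fin n → ℤ)) → Set (EuclideanSpace ℝ (Fin n)) :=
    fun q => {y | ∀ i, (q.2 i : ℝ) * δ - δ ≤ y i ∧ y i < ((q.2 i : ℝ) + 1) * δ + δ} with hbigdef
  -- Step 1: covering
  have hcover : ((⋃ q ∈ F.filter (fun q => q.1 = (k₀:ℤ)), dyadicCube (n := n) q)
        + ball (0 : EuclideanSpace ℝ (Fin n)) δ) ∩ ball x r ⊆ ⋃ q ∈ S, bigCube q := by
    rintro y ⟨hy1, hy2⟩
    rw [Set.mem_add] at hy1
    obtain ⟨a, ha, b, hb, hab⟩ := hy1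
    simp only [Set.mem_iUnion] at ha
    obtain ⟨q, hqF, haq⟩ := ha
    rw [Finset.mem_filter] at hqF
    have hbnorm : ‖b‖ < δ := by simpa [dist_eq_norm] using mem_ball_iff_norm.mp hb
    have hax : a ∈ ball x (3*r) := by
      rw [mem_ball]
      have h1 : dist a y < δ := by
        rw [dist_eq_norm, ← hab]
        simpa using hbnorm
      calc dist a x ≤ dist a y + dist y x := dist_triangle a y x
        _ < δ + r := add_lt_add h1 (mem_ball.mp hy2)
        _ ≤ 3 * r := by linarith [hδr]
    have hqS : q ∈ S := by
      rw [hSdef, Finset.mem_filter]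
      exact ⟨hqF.1, hqF.2, ⟨a, haq, hax⟩⟩
    refine Set.mem_iUnion.mpr ⟨q, Set.mem_iUnion.mpr ⟨hqS, ?_⟩⟩
    intro i
    have hbi : |b i| < δ := lt_of_le_of_lt (coord_le_norm b i) hbnorm
    have hyi : y i = a i + b i := by rw [← hab]; rfl
    obtain ⟨h1, h2⟩ := haq i
    rw [hqF.2] at h1 h2
    rw [hyi]
    constructor
    · have := abs_lt.mp hbi
      nlinarith [this.1]
    · have := abs_lt.mp hbi
      nlinarith [this.2]
  -- Step 2: volume of each big cube
  have hvol : ∀ q : ℤ × (Fin n → ℤ), volume (bigCube q) = ENNReal.ofReal ((3*δ)^n) := by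
    intro q
    rw [hbigdef]
    have := volume_box (n := n) (fun i => (q.2 i : ℝ) * δ - δ) (fun i => ((q.2 i : ℝ) + 1) * δ + δ)
    rw [this]
    have heq : ∀ i : Fin n, ((q.2 i : ℝ) + 1) * δ + δ - ((q.2 i : ℝ) * δ - δ) = 3*δ := by
      intro i; ring
    simp only [heq]
    rw [Finset.prod_const, Finset.card_univ, Fintype.card_fin,
      ← ENNReal.ofReal_pow (by positivity)]
  -- Step 3: cardinality bound
  have hcard : (S.card : ℝ) ≤ 13^n * (r/δ)^α := by
    classical
    set p : (ℤ × (Fin n → ℤ)) → (Fin n → ℤ) := fun q i => q.2 i / 2^d with hpdef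
    set T : Finset (Fin n → ℤ) := S.image p with hTdef
    have hfib : ∀ q ∈ S, p q ∈ T := fun q hq => Finset.mem_image_of_mem p hq
    have hcards : S.card = ∑ m' ∈ T, (S.filter (fun q => p q = m')).card :=
      Finset.card_eq_sum_card_fiberwise hfib
    -- fiber bound
    have hfiber : ∀ m' ∈ T, ((S.filter (fun q => p q = m')).card : ℝ) * δ^α ≤ ℓ^α := by
      intro m' _
      have hsub : S.filter (fun q => p q = m')
          ⊆ F.filter (fun q => dyadicCube (n := n) q ⊆ dyadicCube (n := n) (L, m')) := by
        intro q hq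
        rw [Finset.mem_filter] at hq
        obtain ⟨hqS, hqp⟩ := hq
        rw [hSdef, Finset.mem_filter] at hqS
        rw [Finset.mem_filter]
        refine ⟨hqS.1, ?_⟩
        have hq1 : q = ((k₀:ℤ), q.2) := Prod.ext hqS.2.1 rfl
        rw [hq1]
        have := dyadicCube_subset_parent (n := n) (k₀:ℤ) L d (by omega) q.2
        rwa [show (fun i => q.2 i / 2^d) = m' from hqp] at this
      calc ((S.filter (fun q => p q = m')).card : ℝ) * δ^α
          = ∑ q ∈ S.filter (fun q => p q = m'), ((2:ℝ)^(-q.1))^α := by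
            rw [Finset.sum_congr rfl (fun q hq => ?_), Finset.sum_const, nsmul_eq_mul]
            rw [Finset.mem_filter] at hq
            have : q.1 = (k₀:ℤ) := by
              have := hq.1; rw [hSdef, Finset.mem_filter] at this; exact this.2.1
            rw [this]
        _ ≤ ∑ q ∈ F.filter (fun q => dyadicCube (n := n) q ⊆ dyadicCube (n := n) (L, m')),
              ((2:ℝ)^(-q.1))^α := by
            apply Finset.sum_le_sum_of_subset_of_nonneg hsub
            intro q _ _
            exact Real.rpow_nonneg (by positivity) α
        _ ≤ ((2:ℝ)^(-L))^α := hmass (L, m')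
    -- T card bound
    have hT13 : T.card ≤ 13^n := by
      have hTsub : T ⊆ Fintype.piFinset
          (fun i => Finset.Icc (⌊(x i - 3*r)/ℓ⌋) (⌊(x i + 3*r)/ℓ⌋)) := by
        intro m' hm'
        rw [hTdef, Finset.mem_image] at hm'
        obtain ⟨q, hqS, hqp⟩ := hm'
        rw [hSdef, Finset.mem_filter] at hqS
        obtain ⟨z, hz, hzball⟩ := hqS.2.2
        have hq1 : q = ((k₀:ℤ), q.2) := Prod.ext hqS.2.1 rfl
        have hzpar : z ∈ dyadicCube (n := n) (L, m') := by
          have := dyadicCube_subset_parent (n := n) (k₀:ℤ) L d (by omega) q.2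
          rw [show (fun i => q.2 i / 2^d) = m' from hqp] at this
          exact this (hq1 ▸ hz)
        rw [Fintype.mem_piFinset]
        intro i
        obtain ⟨hz1, hz2⟩ := hzpar i
        simp only at hz1 hz2
        have hzi : |z i - x i| < 3*r := by
          have : dist z x < 3*r := mem_ball.mp hzball
          calc |z i - x i| = |(z - x) i| := by norm_num [PiLp.sub_apply]
            _ ≤ ‖z - x‖ := coord_le_norm _ i
            _ = dist z x := (dist_eq_norm z x).symm
            _ < 3*r := this
        rw [Finset.mem_Icc]
        constructor
        · -- lower
          have h1 : (x i - 3*r)/ℓ < (m' i : ℝ) + 1 := by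
            rw [div_lt_iff₀ hℓ0]
            have := abs_lt.mp hzi
            nlinarith [this.1]
          have h2 : (⌊(x i - 3*r)/ℓ⌋ : ℝ) < (m' i : ℝ) + 1 :=
            lt_of_le_of_lt (Int.floor_le _) h1
          exact Int.lt_add_one_iff.mp (by exact_mod_cast h2)
        · -- upper
          apply Int.le_floor.mpr
          rw [le_div_iff₀ hℓ0]
          have := abs_lt.mp hzi
          nlinarith [this.2]
      calc T.card ≤ _ := Finset.card_le_card hTsub
        _ = ∏ i : Fin n, (Finset.Icc (⌊(x i - 3*r)/ℓ⌋) (⌊(x i + 3*r)/ℓ⌋)).card :=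
            Fintype.card_piFinset _
        _ ≤ ∏ i : Fin n, 13 := by
            apply Finset.prod_le_prod'
            intro i _
            rw [Int.card_Icc]
            have hlo : ((x i - 3*r)/ℓ - 1 : ℝ) < ⌊(x i - 3*r)/ℓ⌋ := Int.sub_one_lt_floor _
            have hhi : (⌊(x i + 3*r)/ℓ⌋ : ℝ) ≤ (x i + 3*r)/ℓ := Int.floor_le _
            have hdiff : ⌊(x i + 3*r)/ℓ⌋ - ⌊(x i - 3*r)/ℓ⌋ ≤ 12 := by
              have : (⌊(x i + 3*r)/ℓ⌋ : ℝ) - ⌊(x i - 3*r)/ℓ⌋ < 6*r/ℓ + 1 := by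
                have : (x i + 3*r)/ℓ - ((x i - 3*r)/ℓ - 1) = 6*r/ℓ + 1 := by
                  field_simp; ring
                nlinarith [hlo, hhi]
              have h6 : 6*r/ℓ < 12 := by
                rw [div_lt_iff₀ hℓ0]; nlinarith
              have : (⌊(x i + 3*r)/ℓ⌋ : ℝ) - ⌊(x i - 3*r)/ℓ⌋ < 13 := by linarith
              exact_mod_cast Int.lt_add_one_iff.mp (by exact_mod_cast this)
            omega
        _ = 13^n := by rw [Finset.prod_const, Finset.card_univ, Fintype.card_fin]
    -- combine
    have hsum : (S.card : ℝ) * δ^α ≤ (13:ℝ)^n * ℓ^α := by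
      calc (S.card : ℝ) * δ^α
          = ∑ m' ∈ T, ((S.filter (fun q => p q = m')).card : ℝ) * δ^α := by
            rw [hcards]; push_cast; rw [Finset.sum_mul]
        _ ≤ ∑ m' ∈ T, ℓ^α := Finset.sum_le_sum hfiber
        _ = T.card * ℓ^α := by rw [Finset.sum_const, nsmul_eq_mul]
        _ ≤ (13:ℝ)^n * ℓ^α := by
            apply mul_le_mul_of_nonneg_right _ (Real.rpow_nonneg hℓ0.le α)
            exact_mod_cast hT13
    have hℓrα : ℓ^α ≤ r^α := Real.rpow_le_rpow hℓ0.le hℓr hα.le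
    have hδα : (0:ℝ) < δ^α := Real.rpow_pos_of_pos hδ0 α
    rw [show (r/δ)^α = r^α / δ^α from Real.div_rpow hr0.le hδ0.le α]
    rw [show (13:ℝ)^n * (r^α/δ^α) = 13^n * r^α / δ^α by ring]
    rw [le_div_iff₀ hδα]
    calc (S.card : ℝ) * δ^α ≤ (13:ℝ)^n * ℓ^α := hsum
      _ ≤ 13^n * r^α := mul_le_mul_of_nonneg_left hℓrα (by positivity)
  -- Step 4: put together
  calc volume (((⋃ q ∈ F.filter (fun q => q.1 = (k₀:ℤ)), dyadicCube (n := n) q)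
          + ball (0 : EuclideanSpace ℝ (Fin n)) δ) ∩ ball x r)
      ≤ volume (⋃ q ∈ S, bigCube q) := measure_mono hcover
    _ ≤ ∑ q ∈ S, volume (bigCube q) := measure_biUnion_finset_le S bigCube
    _ = S.card * ENNReal.ofReal ((3*δ)^n) := by
        rw [Finset.sum_congr rfl (fun q _ => hvol q), Finset.sum_const, nsmul_eq_mul]
    _ ≤ ENNReal.ofReal ((13^n * (r/δ)^α) * (3*δ)^n) := by
        rw [ENNReal.ofReal_mul (by positivity)]
        apply mul_le_mul_left
        rw [← ENNReal.ofReal_natCast]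
        exact ENNReal.ofReal_le_ofReal hcard
    _ = ENNReal.ofReal ((39:ℝ)^n * δ^(n:ℝ) * (r/δ)^α) := by
        congr 1
        rw [Real.rpow_natCast]
        have h39 : (39:ℝ)^n = 13^n * 3^n := by rw [← mul_pow]; norm_num
        rw [h39, mul_pow]
        ring
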